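/- arXiv:2310.14252 — 5 statements merged into one kernel-verified Lean document; each statement's English description precedes it below -/
import Mathlib

section
/- For every finite sequence of digits a_t, …, a_0 with each a_i ∈ {0, 1, 2}, one has −2 + 2√3/3 < [x0]_K − γ·[x]_K < 2√3/3, where γ = 1 + √3, [x]_K = ∑_{0 ≤ i ≤ t} a_i·𝒦_i, and [x0]_K = ∑_{0 ≤ i ≤ t} a_i·𝒦_{i+1} (i.e., the value of the digit string with a 0 appended at the least significant end). -/
open Finset

/-- The sequence 𝒦 with 𝒦₀ = 1, 𝒦₁ = 3, 𝒦ₙ = 2𝒦ₙ₋₁ + 2𝒦ₙ₋₂. -/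
def Kcal : ℕ → ℕ
  | 0 => 1
  | 1 => 3
  | (n + 2) => 2 * Kcal (n + 1) + 2 * Kcal n

/-- For a digit string `x = a_t ⋯ a_0`, given here as the list `l = [a_0, a_1, …, a_t]`
(least significant digit first), `[x]_K = ∑ a_i 𝒦_i`. -/
def valK (l : List ℕ) : ℕ := ∑ i ∈ Finset.range l.length, l.getD i 0 * Kcal i

/-- `[x0]_K = ∑ a_i 𝒦_{i+1}`: the value of the digit string with a `0` appended at
the least significant end. -/
def valK0 (l : List ℕ) : ℕ := ∑ i ∈ Finset.range l.length, l.getD i 0 * Kcal (i + 1)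

/-!
Write `D(x) = [x0]_K - γ [x]_K` (`gapK` below). Prepending the digit `a` gives
`[ax]_K = a + [x0]_K` and `[ax0]_K = 3a + 2[x0]_K + 2[x]_K`, so, since `(1 - √3)(1 + √3) = -2`,
`D(ax) = (2 - √3) a + (1 - √3) D(x)`. The open interval `(c - 2, c)` with `c = 2√3/3` is mapped
into itself by `t ↦ (2 - √3) a + (1 - √3) t` for every `a ∈ [0, 2]`: the endpoint `c` is sent to
`c - 2` and `c - 2` to `c - 2 (2 - √3)`, which the digit shift `(2 - √3) a` cannot push past `c`.
As `D` of the empty string is `0 ∈ (c - 2, c)`, induction on the digits concludes.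
-/

lemma Kcal_add_two (n : ℕ) : Kcal (n + 2) = 2 * Kcal (n + 1) + 2 * Kcal n := rfl

lemma valK_cons (a : ℕ) (l : List ℕ) : valK (a :: l) = a + valK0 l := by
  simp [valK, valK0, sum_range_succ', Kcal, add_comm]

lemma valK0_cons (a : ℕ) (l : List ℕ) :
    valK0 (a :: l) = 3 * a + 2 * valK0 l + 2 * valK l := by
  simp only [valK, valK0, List.length_cons, sum_range_succ', List.getD_cons_succ,
    List.getD_cons_zero, Kcal_add_two, mul_add, sum_add_distrib, mul_left_comm _ 2, ← mul_sum]
  simp only [Kcal]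
  ring

noncomputable def gapK (l : List ℕ) : ℝ := valK0 l - (1 + √3) * valK l

lemma gapK_nil : gapK [] = 0 := by
  simp [gapK, valK, valK0]

lemma gapK_cons (a : ℕ) (l : List ℕ) :
    gapK (a :: l) = (2 - √3) * a + (1 - √3) * gapK l := by
  have hsq : √3 ^ 2 = 3 := Real.sq_sqrt (by norm_num)
  simp only [gapK, valK_cons, valK0_cons]
  push_cast
  linear_combination -(valK l : ℝ) * hsq

lemma sqrt_three_mem_Ioo : √3 ∈ Set.Ioo (1 : ℝ) 2 := by
  have hsq : √3 ^ 2 = 3 := Real.sq_sqrt (by norm_num)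
  constructor <;> nlinarith [Real.sqrt_nonneg 3]

lemma digit_step_mem_Ioo {a t : ℝ} (ha₀ : 0 ≤ a) (ha₂ : a ≤ 2)
    (ht : t ∈ Set.Ioo (-2 + 2 * √3 / 3) (2 * √3 / 3)) :
    (2 - √3) * a + (1 - √3) * t ∈ Set.Ioo (-2 + 2 * √3 / 3) (2 * √3 / 3) := by
  have hsq : √3 ^ 2 = 3 := Real.sq_sqrt (by norm_num)
  obtain ⟨hs₁, hs₂⟩ := sqrt_three_mem_Ioo
  obtain ⟨ht₁, ht₂⟩ := ht
  constructor
  · nlinarith [mul_pos (sub_pos.2 hs₁) (sub_pos.2 ht₂)]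
  · nlinarith [mul_pos (sub_pos.2 hs₁) (sub_pos.2 ht₁), mul_nonneg (sub_nonneg.2 hs₂.le) ha₀,
      mul_nonneg (sub_nonneg.2 hs₂.le) (sub_nonneg.2 ha₂)]

lemma gapK_mem_Ioo (l : List ℕ) (hl : ∀ d ∈ l, d ≤ 2) :
    gapK l ∈ Set.Ioo (-2 + 2 * √3 / 3) (2 * √3 / 3) := by
  induction l with
  | nil =>
    obtain ⟨hs₁, hs₂⟩ := sqrt_three_mem_Ioo
    rw [gapK_nil]
    constructor <;> linarith
  | cons a l ih =>
    rw [gapK_cons]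
    refine digit_step_mem_Ioo a.cast_nonneg ?_ (ih fun d hd => hl d (List.mem_cons_of_mem a hd))
    exact_mod_cast hl a List.mem_cons_self

theorem valK0_sub_gamma_valK_bounds :
    ∀ l : List ℕ, (∀ d ∈ l, d ≤ 2) →
      -2 + 2 * Real.sqrt 3 / 3 < (valK0 l : ℝ) - (1 + Real.sqrt 3) * (valK l : ℝ) ∧
      (valK0 l : ℝ) - (1 + Real.sqrt 3) * (valK l : ℝ) < 2 * Real.sqrt 3 / 3 :=
  fun l hl => gapK_mem_Ioo l hl
end

section
/- (Irvine's conjecture) For all n ≥ 0, g_n = ∑_{1 ≤ i ≤ n} k_i. -/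
/-!
Writing `S_v(n)` for the sum of the first `n` letters of a binary word `v`, every binary word
`w` satisfies `S_{h(w)}(n) = n - S_w(⌊S_{h(w)}(n - 1) / 2⌋)` for `1 ≤ n ≤ |h(w)|`. Both blocks
`h(0) = 11` and `h(1) = 110` have digit sum `2`, so a prefix of `h(w)` ending inside the block of
the `j`-th letter of `w` has sum `2 (j - 1)` plus the part of that block, and `⌊S/2⌋` points back
into `w` at the letter that produced the block; the identity then reduces to the one-letter words
`[0]` and `[1]`. Applied to `w = h^n(1)`, whose image is again a prefix of `k`, it says that the
partial sums of `k` obey Gutkovskiy's recurrence, and that recurrence has only one solution.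
-/

open Finset

/-- The substitution `h` with `h(1) = 110` and `h(0) = 11`. -/
def hsub : ℕ → List ℕ
  | 0 => [1, 1]
  | 1 => [1, 1, 0]
  | _ => []

/-- `h` extended to words by concatenation. -/
def happ (w : List ℕ) : List ℕ := w.flatMap hsub

/-- `K n = h^n(1)`. -/
def Kword (n : ℕ) : List ℕ := happ^[n] [1]

def IsGutkovskiy (g : ℕ → ℕ) : Prop :=
  g 0 = 0 ∧ ∀ n, 1 ≤ n → g n = n - g (g (n - 1) / 2)

theorem IsGutkovskiy.le_self {g : ℕ → ℕ} (hg : IsGutkovskiy g) (n : ℕ) : g n ≤ n := by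
  rcases Nat.eq_zero_or_pos n with rfl | hn
  · exact hg.1.le
  · rw [hg.2 n hn]
    exact Nat.sub_le _ _

theorem IsGutkovskiy.unique {f g : ℕ → ℕ} (hf : IsGutkovskiy f) (hg : IsGutkovskiy g) :
    f = g := by
  funext n
  induction n using Nat.strong_induction_on with
  | _ n ih =>
    rcases Nat.eq_zero_or_pos n with rfl | hn
    · rw [hf.1, hg.1]
    · have hprev : f (n - 1) = g (n - 1) := ih (n - 1) (by omega)
      have hidx : f (n - 1) / 2 < n := by have := hf.le_self (n - 1); omega
      rw [hf.2 n hn, hg.2 n hn, ← hprev, ih _ hidx]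

theorem sum_Icc_eq_sum_take {k : ℕ → ℕ} {l : List ℕ}
    (hkl : ∀ i < l.length, k (i + 1) = l.getD i 0) {n : ℕ} (hn : n ≤ l.length) :
    ∑ i ∈ Icc 1 n, k i = (l.take n).sum := by
  induction n with
  | zero => simp
  | succ n ih =>
    rw [sum_Icc_succ_top (by omega), ih (by omega), List.sum_take_succ _ _ hn,
      hkl n hn, List.getD_eq_getElem _ _ hn]

section Substitution

variable {w : List ℕ}

theorem happ_append (u v : List ℕ) : happ (u ++ v) = happ u ++ happ v :=
  List.flatMap_append

theorem happ_singleton (a : ℕ) : happ [a] = hsub a := by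
  simp [happ]

theorem forall_le_one_happ (hw : ∀ x ∈ w, x ≤ 1) : ∀ x ∈ happ w, x ≤ 1 := by
  simp only [happ, List.mem_flatMap]
  rintro x ⟨a, ha, hxa⟩
  have := hw a ha
  interval_cases a <;> simp [hsub] at hxa <;> omega

theorem sum_happ (hw : ∀ x ∈ w, x ≤ 1) : (happ w).sum = 2 * w.length := by
  induction w with
  | nil => rfl
  | cons a u ih =>
    have ha : a ≤ 1 := hw a (by simp)
    rw [← List.singleton_append, happ_append, List.sum_append,
      ih fun x hx => hw x (by simp [hx]), happ_singleton]
    interval_cases a <;> simp [hsub] <;> ring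

theorem length_happ (hw : ∀ x ∈ w, x ≤ 1) : (happ w).length = 2 * w.length + w.sum := by
  induction w with
  | nil => rfl
  | cons a u ih =>
    have ha : a ≤ 1 := hw a (by simp)
    rw [← List.singleton_append, happ_append, List.length_append,
      ih fun x hx => hw x (by simp [hx]), happ_singleton]
    interval_cases a <;> simp [hsub] <;> ring

theorem sum_take_happ_div_two_le (hw : ∀ x ∈ w, x ≤ 1) (n : ℕ) :
    ((happ w).take n).sum / 2 ≤ w.length := by
  have := (List.take_sublist n (happ w)).sum_le_sum fun _ _ => Nat.zero_le _
  rw [sum_happ hw] at this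
  omega

theorem sum_take_hsub_add {a r : ℕ} (ha : a ≤ 1) (hr₁ : 1 ≤ r) (hr : r ≤ (hsub a).length) :
    ((hsub a).take r).sum + ([a].take (((hsub a).take (r - 1)).sum / 2)).sum = r := by
  interval_cases a <;> simp only [hsub, List.length_cons, List.length_nil] at hr <;>
    interval_cases r <;> rfl

theorem sum_take_happ (hw : ∀ x ∈ w, x ≤ 1) {n : ℕ} (hn₁ : 1 ≤ n)
    (hn : n ≤ (happ w).length) :
    ((happ w).take n).sum = n - (w.take (((happ w).take (n - 1)).sum / 2)).sum := by
  induction w using List.reverseRecOn generalizing n with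
  | nil => simp [happ] at hn; omega
  | append_singleton u a ih =>
    have hu : ∀ x ∈ u, x ≤ 1 := fun x hx => hw x (by simp [hx])
    have ha : a ≤ 1 := hw a (by simp)
    rw [happ_append, happ_singleton] at hn ⊢
    by_cases hin : n ≤ (happ u).length
    · rw [List.take_append_of_le_length hin,
        List.take_append_of_le_length (i := n - 1) (by omega),
        List.take_append_of_le_length (sum_take_happ_div_two_le hu (n - 1))]
      exact ih hu hn₁ hin
    · obtain ⟨r, rfl⟩ : ∃ r, n = (happ u).length + r := ⟨n - (happ u).length, by omega⟩
      rw [List.length_append] at hn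
      have hblock := sum_take_hsub_add ha (r := r) (by omega) (by omega)
      have hidx : (2 * u.length + ((hsub a).take (r - 1)).sum) / 2
          = u.length + ((hsub a).take (r - 1)).sum / 2 := by omega
      have hpred : (happ u).length + r - 1 = (happ u).length + (r - 1) := by omega
      rw [hpred, List.take_length_add_append, List.take_length_add_append, List.sum_append,
        List.sum_append, sum_happ hu, hidx, List.take_length_add_append, List.sum_append,
        length_happ hu]
      omega

end Substitution

theorem Kword_succ (n : ℕ) : Kword (n + 1) = happ (Kword n) :=
  Function.iterate_succ_apply' happ n [1]

theorem forall_le_one_Kword (n : ℕ) : ∀ x ∈ Kword n, x ≤ 1 := by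
  induction n with
  | zero => simp [Kword]
  | succ n ih => rw [Kword_succ]; exact forall_le_one_happ ih

theorem lt_length_Kword (n : ℕ) : n < (Kword n).length := by
  induction n with
  | zero => simp [Kword]
  | succ n ih =>
    rw [Kword_succ, length_happ (forall_le_one_Kword n)]
    omega

theorem isGutkovskiy_partialSums_of_Kword {k : ℕ → ℕ}
    (hk : ∀ (m i : ℕ), i < (Kword m).length → k (i + 1) = (Kword m).getD i 0) :
    IsGutkovskiy fun n => ∑ i ∈ Icc 1 n, k i := by
  refine ⟨by simp, fun n hn₁ => ?_⟩
  have hbin := forall_le_one_Kword n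
  have hlen : n ≤ (happ (Kword n)).length := by
    have := lt_length_Kword (n + 1)
    rw [Kword_succ] at this
    omega
  have hprefix {m : ℕ} (hm : m ≤ (happ (Kword n)).length) :
      ∑ i ∈ Icc 1 m, k i = ((happ (Kword n)).take m).sum := by
    rw [← Kword_succ] at hm ⊢
    exact sum_Icc_eq_sum_take (hk (n + 1)) hm
  beta_reduce
  rw [hprefix hlen, hprefix (m := n - 1) (by omega),
    sum_Icc_eq_sum_take (hk n) (sum_take_happ_div_two_le hbin (n - 1))]
  exact sum_take_happ hbin hn₁ hlen

/-- Irvine's conjecture: `g_n = ∑_{1 ≤ i ≤ n} k_i`, where `k = k_1 k_2 k_3 ⋯` is the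
infinite fixed point of `h` (each `h^m(1)` is a prefix of `k`) and `g` is
Gutkovskiy's sequence. -/
theorem irvine_conjecture
    (k : ℕ → ℕ)
    (hk : ∀ (m i : ℕ), i < (Kword m).length → k (i + 1) = (Kword m).getD i 0)
    (g : ℕ → ℕ)
    (hg0 : g 0 = 0) (hg : ∀ n : ℕ, 1 ≤ n → g n = n - g (g (n - 1) / 2)) :
    ∀ n : ℕ, g n = ∑ i ∈ Finset.Icc 1 n, k i :=
  congrFun (IsGutkovskiy.unique ⟨hg0, hg⟩ (isGutkovskiy_partialSums_of_Kword hk))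
end

section
/- There exists a constant C such that |g_n − (√3 − 1)·n| ≤ C for all n ≥ 0; that is, g_n = (√3 − 1)n + O(1). -/
/-- `g_n = (√3 − 1)n + O(1)` for Gutkovskiy's sequence. -/
theorem gut_asymptotic (g : ℕ → ℕ)
    (hg0 : g 0 = 0) (hg : ∀ n : ℕ, 1 ≤ n → g n = n - g (g (n - 1) / 2)) :
    ∃ C : ℝ, ∀ n : ℕ, |(g n : ℝ) - (Real.sqrt 3 - 1) * (n : ℝ)| ≤ C := by
  -- g n ≤ n
  have hgle : ∀ n, g n ≤ n := by
    intro n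
    cases n with
    | zero => simp [hg0]
    | succ m =>
      rw [hg (m+1) (by omega)]
      exact Nat.sub_le _ _
  -- addition form of the recurrence
  have hadd : ∀ n, g (n+1) + g (g n / 2) = n + 1 := by
    intro n
    have h := hg (n+1) (by omega)
    simp only [Nat.add_sub_cancel] at h
    have h1 : g (g n / 2) ≤ n + 1 := by
      have h2 := hgle (g n / 2)
      have h3 := Nat.div_le_self (g n) 2
      have h4 := hgle n
      omega
    omega
  -- g is slow
  have hslow : ∀ n, g n ≤ g (n+1) ∧ g (n+1) ≤ g n + 1 := by
    intro n
    induction n using Nat.strong_induction_on with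
    | _ n ih =>
      match n with
      | 0 =>
        have h := hadd 0
        simp [hg0] at h ⊢
        omega
      | m+1 =>
        have h1 := hadd m
        have h2 := hadd (m+1)
        have hab := ih m (by omega)
        have haM := hgle m
        have key : g (g m / 2) ≤ g (g (m+1) / 2) ∧ g (g (m+1) / 2) ≤ g (g m / 2) + 1 := by
          rcases Nat.lt_or_ge (g m / 2) (g (m+1) / 2) with h | h
          · have heq : g (m+1) / 2 = g m / 2 + 1 := by omega
            rw [heq]
            exact ih (g m / 2) (by omega)
          · have heq : g (m+1) / 2 = g m / 2 := by omega
            rw [heq]; omega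
        omega
  have hmono : Monotone g := monotone_nat_of_le_succ (fun n => (hslow n).1)
  have hg1 : g 1 = 1 := by
    have h := hadd 0
    simp [hg0] at h
    omega
  have hgpos : ∀ n, 1 ≤ n → 1 ≤ g n := by
    intro n hn
    calc 1 = g 1 := hg1.symm
    _ ≤ g n := hmono hn
  -- n ≤ N (g n) where N x := x + g (x / 2)
  have hL1 : ∀ n, 1 ≤ n → n ≤ g n + g (g n / 2) := by
    intro n hn
    obtain ⟨m, rfl⟩ : ∃ m, n = m + 1 := ⟨n - 1, by omega⟩
    have h := hadd m
    have h2 : g (g m / 2) ≤ g (g (m+1) / 2) :=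
      hmono (Nat.div_le_div_right (hmono (Nat.le_succ m)))
    omega
  -- N (g n - 1) < n
  have hL2 : ∀ n, 1 ≤ n → (g n - 1) + g ((g n - 1) / 2) < n := by
    intro n hn
    obtain ⟨m, rfl⟩ : ∃ m, n = m + 1 := ⟨n - 1, by omega⟩
    have h := hadd m
    have hs := (hslow m).2
    have hmono2 : g ((g (m+1) - 1) / 2) ≤ g (g m / 2) :=
      hmono (Nat.div_le_div_right (by omega))
    have := hgpos (m+1) (by omega)
    omega
  set s := Real.sqrt 3 with hsdef
  have hs0 : (0:ℝ) ≤ s := Real.sqrt_nonneg 3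
  have hs2 : s ^ 2 = 3 := Real.sq_sqrt (by norm_num)
  have hslb : (1.7:ℝ) ≤ s := by nlinarith
  have hsub : s ≤ 1.74 := by nlinarith [sq_nonneg (s - 1.74)]
  have hsm1 : (0:ℝ) ≤ s - 1 := by linarith
  -- key algebraic identity: (s-1) * ((s+1)/2 * t) = t
  have hinv : ∀ t : ℝ, (s - 1) * ((s + 1) / 2 * t) = t := by
    intro t
    linear_combination (t / 2) * hs2
  -- main bound: |N x - β x| ≤ 6 where N x = x + g (x/2), β = (s+1)/2
  have hMain : ∀ x : ℕ, |((x:ℝ) + (g (x/2) : ℝ)) - (s + 1) / 2 * (x:ℝ)| ≤ 6 := by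
    intro x
    induction x using Nat.strong_induction_on with
    | _ x ih =>
      rcases Nat.lt_or_ge x 2 with hx | hx
      · interval_cases x
        · norm_num [hg0]
        · norm_num [hg0]
          rw [abs_le]
          constructor <;> nlinarith
      · have hy1 : 1 ≤ x / 2 := by omega
        set y := x / 2 with hydef
        obtain ⟨z', hz'⟩ : ∃ z', g y = z' + 1 := ⟨g y - 1, by have := hgpos y hy1; omega⟩
        have hzy : z' + 1 ≤ y := hz' ▸ hgle y
        have hzx : z' + 1 < x := by omega
        have h1 : y ≤ (z' + 1) + g ((z' + 1) / 2) := by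
          have := hL1 y hy1
          rw [hz'] at this
          exact this
        have h2 : z' + g (z' / 2) < y := by
          have h := hL2 y hy1
          rw [hz'] at h
          simpa using h
        have ih1 := ih (z' + 1) hzx
        have ih2 := ih z' (by omega)
        rw [abs_le] at ih1 ih2
        -- cast to reals
        have c1 : (y:ℝ) ≤ ((z':ℝ) + 1) + (g ((z'+1)/2) : ℝ) := by exact_mod_cast h1
        have c2 : (z':ℝ) + (g (z'/2) : ℝ) ≤ (y:ℝ) - 1 := by
          have : (z':ℝ) + (g (z'/2) : ℝ) + 1 ≤ (y:ℝ) := by exact_mod_cast h2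
          linarith
        have cx1 : 2 * (y:ℝ) ≤ (x:ℝ) := by exact_mod_cast (by omega : 2 * y ≤ x)
        have cx2 : (x:ℝ) ≤ 2 * (y:ℝ) + 1 := by exact_mod_cast (by omega : x ≤ 2 * y + 1)
        -- β z' ≤ y + 5 hence β (z'+1) ≤ y + 5 + β
        have P1 : (s + 1) / 2 * ((z':ℝ) + 1) ≤ (y:ℝ) + 5 + (s + 1) / 2 := by
          have := ih2.1
          push_cast at this ⊢
          linarith [c2]
        have P2 : (y:ℝ) - 6 ≤ (s + 1) / 2 * ((z':ℝ) + 1) := by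
          have := ih1.2
          push_cast at this
          linarith [c1]
        have key1 : ((z':ℝ) + 1) ≤ (s - 1) * ((y:ℝ) + 5 + (s + 1) / 2) := by
          have h := mul_le_mul_of_nonneg_left P1 hsm1
          rw [hinv] at h
          exact h
        have key2 : (s - 1) * ((y:ℝ) - 6) ≤ ((z':ℝ) + 1) := by
          have h := mul_le_mul_of_nonneg_left P2 hsm1
          rw [hinv] at h
          exact h
        have prod1 : (0:ℝ) ≤ (s - 1) * ((x:ℝ) - 2 * y) := mul_nonneg hsm1 (by linarith)
        have prod2 : (0:ℝ) ≤ (s - 1) * (2 * (y:ℝ) + 1 - x) := mul_nonneg hsm1 (by linarith)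
        rw [hz']
        rw [abs_le]
        push_cast
        constructor
        · linarith [key2, prod2, hs2, hsub, hslb]
        · linarith [key1, prod1, hs2, hsub, hslb]
  -- conclude
  refine ⟨6, fun n => ?_⟩
  cases n with
  | zero => simp [hg0]
  | succ m =>
    obtain ⟨x', hx'⟩ : ∃ x', g (m+1) = x' + 1 := ⟨g (m+1) - 1, by have := hgpos (m+1) (by omega); omega⟩
    have h1 : m + 1 ≤ (x' + 1) + g ((x' + 1) / 2) := by
      have := hL1 (m+1) (by omega)
      rw [hx'] at this
      exact this
    have h2 : x' + g (x' / 2) < m + 1 := by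
      have h := hL2 (m+1) (by omega)
      rw [hx'] at h
      simpa using h
    have ih1 := hMain (x' + 1)
    have ih2 := hMain x'
    rw [abs_le] at ih1 ih2
    have c1 : ((m:ℝ) + 1) ≤ ((x':ℝ) + 1) + (g ((x'+1)/2) : ℝ) := by exact_mod_cast h1
    have c2 : (x':ℝ) + (g (x'/2) : ℝ) ≤ (m:ℝ) := by
      have : (x':ℝ) + (g (x'/2) : ℝ) + 1 ≤ (m:ℝ) + 1 := by exact_mod_cast h2
      linarith
    have P1 : (s + 1) / 2 * ((x':ℝ) + 1) ≤ ((m:ℝ) + 1) + 5 + (s + 1) / 2 := by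
      have := ih2.1
      push_cast at this
      linarith [c2]
    have P2 : ((m:ℝ) + 1) - 6 ≤ (s + 1) / 2 * ((x':ℝ) + 1) := by
      have := ih1.2
      push_cast at this
      linarith [c1]
    have key1 : ((x':ℝ) + 1) ≤ (s - 1) * (((m:ℝ) + 1) + 5 + (s + 1) / 2) := by
      have h := mul_le_mul_of_nonneg_left P1 hsm1
      rw [hinv] at h
      exact h
    have key2 : (s - 1) * (((m:ℝ) + 1) - 6) ≤ ((x':ℝ) + 1) := by
      have h := mul_le_mul_of_nonneg_left P2 hsm1
      rw [hinv] at h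
      exact h
    rw [hx', abs_le]
    push_cast
    constructor
    · linarith [key2, hs2, hsub, hslb]
    · linarith [key1, hs2, hsub, hslb]
end

section
/- For all n ≥ 0, g_n = 2·h_n + g'_n, where g'_n = g_n mod 2 and h_n = ∑_{0 ≤ i < n} g'_i. -/
/-!
Gutkovskiy's sequence moves by steps of `0` or `1`, and it always steps up from an odd value:
if `g (m + 1)` is odd then `g (m + 1) / 2 = g m / 2`, so the subtracted term of the recursion
does not change and `g (m + 2) = g (m + 1) + 1`. Hence `g` climbs from each even value `2k` to
`2k + 2` through exactly one odd value, and `h n` counts the completed climbs.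
-/

/-- The recursion of Gutkovskiy's sequence, indexed so that no truncated `n - 1` appears. -/
structure IsGutkovskiy_s14 (g : ℕ → ℕ) : Prop where
  zero : g 0 = 0
  succ : ∀ n, g (n + 1) = n + 1 - g (g n / 2)

namespace IsGutkovskiy_s14

variable {g : ℕ → ℕ}

theorem le_self_s14 (hg : IsGutkovskiy_s14 g) (n : ℕ) : g n ≤ n := by
  cases n with
  | zero => simp [hg.zero]
  | succ n => rw [hg.succ]; omega

theorem succ_succ_eq_of_half_eq (hg : IsGutkovskiy_s14 g) {m : ℕ} (h : g (m + 1) / 2 = g m / 2) :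
    g (m + 2) = g (m + 1) + 1 := by
  have hle : g (g m / 2) ≤ m := (hg.le_self_s14 _).trans ((Nat.div_le_self _ _).trans (hg.le_self_s14 m))
  rw [hg.succ (m + 1), h, hg.succ m]
  omega

theorem succ_eq_or_eq_succ (hg : IsGutkovskiy_s14 g) (n : ℕ) : g (n + 1) = g n ∨ g (n + 1) = g n + 1 := by
  induction n using Nat.strong_induction_on with
  | _ n ih =>
    cases n with
    | zero => simp [hg.succ 0, hg.zero]
    | succ m =>
      have hhalf : g (m + 1) / 2 = g m / 2 ∨ g (m + 1) / 2 = g m / 2 + 1 := by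
        rcases ih m (by omega) with h | h <;> omega
      rcases hhalf with h | h
      · exact Or.inr (hg.succ_succ_eq_of_half_eq h)
      · have hk : g m / 2 < m + 1 := by have := hg.le_self_s14 m; omega
        have hle := hg.le_self_s14 (g m / 2 + 1)
        rw [hg.succ (m + 1), h, hg.succ m]
        rcases ih _ hk with h' | h' <;> omega

theorem succ_eq_add_one_of_odd (hg : IsGutkovskiy_s14 g) {n : ℕ} (hodd : g n % 2 = 1) :
    g (n + 1) = g n + 1 := by
  cases n with
  | zero => simp [hg.zero] at hodd
  | succ m =>
    apply hg.succ_succ_eq_of_half_eq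
    rcases hg.succ_eq_or_eq_succ m with h | h <;> omega

end IsGutkovskiy_s14

/-- `g_n = 2h_n + g'_n`, where `g'_n = g_n mod 2` and `h_n = ∑_{0 ≤ i < n} g'_i`,
for Gutkovskiy's sequence `g`. -/
theorem gut_eq_two_h_add_parity (g : ℕ → ℕ)
    (hg0 : g 0 = 0) (hg : ∀ n : ℕ, 1 ≤ n → g n = n - g (g (n - 1) / 2)) :
    ∀ n : ℕ, g n = 2 * (∑ i ∈ Finset.range n, g i % 2) + g n % 2 := by
  have hgut : IsGutkovskiy_s14 g := ⟨hg0, fun n => hg (n + 1) (by omega)⟩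
  intro n
  induction n with
  | zero => simp [hg0]
  | succ n ih =>
    rw [Finset.sum_range_succ]
    by_cases hodd : g n % 2 = 1
    · have := hgut.succ_eq_add_one_of_odd hodd
      omega
    · rcases hgut.succ_eq_or_eq_succ n with h | h <;> omega
end

section
/- For every n ≥ 1, the infinite word k has at most two distinct right-special factors of length n. -/
/-- `w` is a factor of the infinite word `k` (indexed from 1):
`w = k_i k_{i+1} ⋯ k_{i+|w|−1}` for some `i ≥ 1`. -/
def IsFactor (k : ℕ → ℕ) (w : List ℕ) : Prop :=
  ∃ i : ℕ, 1 ≤ i ∧ ∀ j : ℕ, j < w.length → w.getD j 0 = k (i + j)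

/-- `w` is a right-special factor of `k`: both `w0` and `w1` are factors of `k`. -/
def IsRightSpecial (k : ℕ → ℕ) (w : List ℕ) : Prop :=
  IsFactor k (w ++ [0]) ∧ IsFactor k (w ++ [1])

/-!
A factor of `k` of length at least 4 is `s ++ h v ++ p` with `s` a proper suffix and `p` a proper
prefix of the blocks `h 0 = 11`, `h 1 = 110`, and this reading is essentially unique: a `0` always
ends a block, and `h v` contains an even number of `1`s. Reading both `w0` and `w1` this way shows
that a right-special factor `w` of length at least 7 is a suffix of `ψ z = h(z)11` for a shorter
right-special factor `z`. Starting from the right-special factors of length at most 6, found by a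
finite computation, every right-special factor is a suffix of some `ψⁿ(1)` (the main branch) or
of some `ψⁿ(111)` (a side branch). The words `ψⁿ(1)` are suffixes of each other, so the main branch
gives one factor of each length. The side branch `ψⁿ(111)` shares with `ψⁿ⁺¹(1)` the suffix
`ψⁿ(11)`, which is longer than every `ψᵐ(111)` with `m < n`; hence right-special factors of the same
length off the main branch lie on the same side branch, and coincide.
-/

namespace List

variable {α β : Type*} (f : α → List β)

theorem exists_eq_flatMap_append_of_prefix {u : List α} {y : List β} (hy : y <+: u.flatMap f) :
    ∃ v p, y = v.flatMap f ++ p ∧ v <+: u ∧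
      (p = [] ∨ ∃ b, p <+: f b ∧ p ≠ f b ∧ v ++ [b] <+: u) := by
  induction u generalizing y with
  | nil => exact ⟨[], [], by simpa using hy, nil_prefix, .inl rfl⟩
  | cons b u ih =>
    obtain ⟨t, ht⟩ := hy
    rw [flatMap_cons] at ht
    rcases append_eq_append_iff.1 ht with ⟨r, hb, -⟩ | ⟨y', rfl, hu⟩
    · by_cases hyb : y = f b
      · exact ⟨[b], [], by simp [hyb], singleton_prefix_cons_iff.2 rfl, .inl rfl⟩
      · exact ⟨[], y, by simp, nil_prefix, .inr ⟨b, ⟨r, hb.symm⟩, hyb, by simp⟩⟩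
    · obtain ⟨v, p, rfl, hv, hp⟩ := ih ⟨t, hu.symm⟩
      refine ⟨b :: v, p, by simp, (prefix_cons_inj b).2 hv, ?_⟩
      rcases hp with rfl | ⟨b', h1, h2, h3⟩
      · exact .inl rfl
      · exact .inr ⟨b', h1, h2, by simpa using h3⟩

theorem exists_eq_append_flatMap_of_suffix {u : List α} {x : List β} (hx : x <:+ u.flatMap f) :
    ∃ v s, x = s ++ v.flatMap f ∧ v <:+ u ∧
      (s = [] ∨ ∃ a, s <:+ f a ∧ s ≠ f a ∧ a :: v <:+ u) := by
  have hrev : x.reverse <+: u.reverse.flatMap (reverse ∘ f) := by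
    rwa [← reverse_flatMap, reverse_prefix]
  obtain ⟨v, p, hxp, hv, hp⟩ := exists_eq_flatMap_append_of_prefix (reverse ∘ f) hrev
  refine ⟨v.reverse, p.reverse, ?_, reverse_prefix.1 (by simpa using hv), ?_⟩
  · rw [← reverse_reverse x, hxp, reverse_append, flatMap_reverse]
  · rcases hp with rfl | ⟨a, h1, h2, h3⟩
    · exact .inl rfl
    · refine .inr ⟨a, ?_, fun h => h2 (by simp [← h]), ?_⟩
      · rw [← reverse_prefix, reverse_reverse]; exact h1
      · rw [← reverse_prefix]; simpa using h3

theorem infix_flatMap_cases {u : List α} {x : List β} (hx : x <:+: u.flatMap f) :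
    (∃ a ∈ u, x <:+: f a) ∨ ∃ u₁ u₂ x₁ x₂, u = u₁ ++ u₂ ∧ x = x₁ ++ x₂ ∧
      x₁ <:+ u₁.flatMap f ∧ x₂ <+: u₂.flatMap f := by
  induction u with
  | nil => exact .inr ⟨[], [], [], x, rfl, rfl, nil_suffix, by simpa using hx⟩
  | cons a u ih =>
    rw [flatMap_cons, infix_append_iff] at hx
    rcases hx with hx | hx | ⟨x₁, x₂, rfl, h₁, h₂⟩
    · exact .inl ⟨a, mem_cons_self, hx⟩
    · rcases ih hx with ⟨b, hb, hxb⟩ | ⟨u₁, u₂, x₁, x₂, rfl, rfl, h₁, h₂⟩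
      · exact .inl ⟨b, mem_cons_of_mem a hb, hxb⟩
      · exact .inr ⟨a :: u₁, u₂, x₁, x₂, rfl, rfl, by simpa using h₁.trans (suffix_append _ _), h₂⟩
    · exact .inr ⟨[a], u, x₁, x₂, rfl, rfl, by simpa using h₁, h₂⟩

theorem IsSuffix.append_isPrefix_infix {a b c d : List α} (hab : a <:+ b) (hcd : c <+: d) :
    a ++ c <:+: b ++ d := by
  obtain ⟨s, rfl⟩ := hab
  obtain ⟨t, rfl⟩ := hcd
  exact ⟨s, t, by simp⟩

theorem exists_eq_append_flatMap_append_of_infix {u : List α} {x : List β}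
    (hx : x <:+: u.flatMap f) (hlen : ∀ a ∈ u, (f a).length < x.length) :
    ∃ s v p, x = s ++ v.flatMap f ++ p ∧ v <:+: u ∧
      (s = [] ∨ ∃ a, s <:+ f a ∧ s ≠ f a ∧ a :: v <:+: u) ∧
      (p = [] ∨ ∃ b, p <+: f b ∧ p ≠ f b ∧ v ++ [b] <:+: u) := by
  rcases infix_flatMap_cases f hx with ⟨a, ha, hxa⟩ | ⟨u₁, u₂, x₁, x₂, rfl, rfl, h₁, h₂⟩
  · exact absurd hxa.length_le (not_le.2 (hlen a ha))
  obtain ⟨v₁, s, rfl, hv₁, hs⟩ := exists_eq_append_flatMap_of_suffix f h₁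
  obtain ⟨v₂, p, rfl, hv₂, hp⟩ := exists_eq_flatMap_append_of_prefix f h₂
  refine ⟨s, v₁ ++ v₂, p, by simp, hv₁.append_isPrefix_infix hv₂, ?_, ?_⟩
  · rcases hs with rfl | ⟨a, h, hne, ha⟩
    · exact .inl rfl
    · exact .inr ⟨a, h, hne, by simpa using ha.append_isPrefix_infix hv₂⟩
  · rcases hp with rfl | ⟨b, h, hne, hb⟩
    · exact .inl rfl
    · exact .inr ⟨b, h, hne, by simpa using hv₁.append_isPrefix_infix hb⟩

variable {f}

theorem length_le_length_flatMap {v : List α} (hf : ∀ a ∈ v, f a ≠ []) :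
    v.length ≤ (v.flatMap f).length := by
  induction v with
  | nil => simp
  | cons a v ih =>
    have ha := length_pos_iff.2 (hf a mem_cons_self)
    have := ih fun b hb => hf b (mem_cons_of_mem a hb)
    simp only [flatMap_cons, length_append, length_cons]
    omega

theorem exists_suffix_flatMap_length_le {u : List α} {x : List β} (hx : x <:+ u.flatMap f)
    (hf : ∀ a ∈ u, f a ≠ []) : ∃ v, v <:+ u ∧ x <:+ v.flatMap f ∧ v.length ≤ x.length := by
  obtain ⟨v, s, rfl, hv, hs⟩ := exists_eq_append_flatMap_of_suffix f hx
  have hlen := length_le_length_flatMap fun b hb => hf b (hv.subset hb)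
  by_cases hs₀ : s = []
  · subst hs₀
    exact ⟨v, hv, suffix_refl _, hlen⟩
  obtain ⟨a, ⟨t, ht⟩, -, ha⟩ := hs.resolve_left hs₀
  have := length_pos_iff.2 hs₀
  exact ⟨a :: v, ha, ⟨t, by simp [← ht]⟩, by simp only [length_cons, length_append]; omega⟩

theorem exists_prefix_flatMap_length_le {u : List α} {x : List β} (hx : x <+: u.flatMap f)
    (hf : ∀ a ∈ u, f a ≠ []) : ∃ v, v <+: u ∧ x <+: v.flatMap f ∧ v.length ≤ x.length := by
  obtain ⟨v, p, rfl, hv, hp⟩ := exists_eq_flatMap_append_of_prefix f hx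
  have hlen := length_le_length_flatMap fun b hb => hf b (hv.subset hb)
  by_cases hp₀ : p = []
  · subst hp₀
    exact ⟨v, hv, by simp, by simpa using hlen⟩
  obtain ⟨b, ⟨t, ht⟩, -, hb⟩ := hp.resolve_left hp₀
  have := length_pos_iff.2 hp₀
  exact ⟨v ++ [b], hb, ⟨t, by simp [← ht]⟩, by simp only [length_append, length_singleton]; omega⟩

theorem exists_infix_flatMap_length_le {u : List α} {x : List β} (hx : x <:+: u.flatMap f)
    (hx₀ : x ≠ []) (hf : ∀ a ∈ u, f a ≠ []) :
    ∃ v, v <:+: u ∧ x <:+: v.flatMap f ∧ v.length ≤ x.length := by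
  rcases infix_flatMap_cases f hx with ⟨a, ha, hxa⟩ | ⟨u₁, u₂, x₁, x₂, rfl, rfl, h₁, h₂⟩
  · exact ⟨[a], (singleton_infix_iff _ _).2 ha, by simpa using hxa, length_pos_iff.2 hx₀⟩
  obtain ⟨v₁, hv₁, hx₁, hlen₁⟩ := exists_suffix_flatMap_length_le h₁ fun a ha => hf a (by simp [ha])
  obtain ⟨v₂, hv₂, hx₂, hlen₂⟩ := exists_prefix_flatMap_length_le h₂ fun a ha => hf a (by simp [ha])
  exact ⟨v₁ ++ v₂, hv₁.append_isPrefix_infix hv₂, by simpa using hx₁.append_isPrefix_infix hx₂,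
    by simp; omega⟩

end List

namespace KFixedPoint

open List

theorem happ_nil : happ [] = [] := rfl

theorem happ_cons (a : ℕ) (w : List ℕ) : happ (a :: w) = hsub a ++ happ w := rfl

theorem happ_append (u v : List ℕ) : happ (u ++ v) = happ u ++ happ v := flatMap_append

theorem happ_singleton (a : ℕ) : happ [a] = hsub a := by simp [happ]

theorem Kword_succ (m : ℕ) : Kword (m + 1) = happ (Kword m) :=
  Function.iterate_succ_apply' happ m [1]

theorem eq_zero_or_one_of_mem {a : ℕ} (ha : a ∈ [0, 1]) : a = 0 ∨ a = 1 := by simpa using ha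

theorem hsub_ne_nil {a : ℕ} (ha : a ∈ [0, 1]) : hsub a ≠ [] := by
  rcases eq_zero_or_one_of_mem ha with rfl | rfl <;> simp [hsub]

theorem happ_subset (u : List ℕ) : happ u ⊆ [0, 1] := by
  intro b hb
  obtain ⟨a, -, hab⟩ := mem_flatMap.1 hb
  match a with
  | 0 | 1 => simp [hsub] at hab; simp; omega
  | _ + 2 => simp [hsub] at hab

theorem Kword_subset (m : ℕ) : Kword m ⊆ [0, 1] := by
  cases m with
  | zero => simp [Kword]
  | succ m => rw [Kword_succ]; exact happ_subset _

theorem count_happ {u : List ℕ} (hu : u ⊆ [0, 1]) : (happ u).count 1 = 2 * u.length := by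
  induction u with
  | nil => rfl
  | cons a u ih =>
    obtain ⟨ha, hu⟩ := cons_subset.1 hu
    rw [happ_cons, count_append, ih hu]
    rcases eq_zero_or_one_of_mem ha with rfl | rfl <;> simp [hsub] <;> ring

theorem length_happ {u : List ℕ} (hu : u ⊆ [0, 1]) :
    (happ u).length = 2 * u.length + u.count 1 := by
  induction u with
  | nil => rfl
  | cons a u ih =>
    obtain ⟨ha, hu⟩ := cons_subset.1 hu
    rw [happ_cons, length_append, ih hu]
    rcases eq_zero_or_one_of_mem ha with rfl | rfl <;> simp [hsub] <;> ring

theorem happ_ne_zero_cons (u t : List ℕ) : happ u ≠ 0 :: t := by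
  induction u with
  | nil => simp [happ_nil]
  | cons a u ih =>
    match a with
    | 0 | 1 => simp [happ_cons, hsub]
    | _ + 2 => simpa [happ_cons, hsub] using ih

theorem eq_of_happ_eq {x y : List ℕ} (hx : x ⊆ [0, 1]) (hy : y ⊆ [0, 1]) (h : happ x = happ y) :
    x = y := by
  induction x generalizing y with
  | nil =>
    cases y with
    | nil => rfl
    | cons b y =>
      obtain ⟨hb, -⟩ := cons_subset.1 hy
      simp [happ_cons, happ_nil, hsub_ne_nil hb] at h
  | cons a x ih =>
    obtain ⟨ha, hx'⟩ := cons_subset.1 hx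
    cases y with
    | nil => simp [happ_cons, happ_nil, hsub_ne_nil ha] at h
    | cons b y =>
      obtain ⟨hb, hy'⟩ := cons_subset.1 hy
      rcases eq_zero_or_one_of_mem ha with rfl | rfl <;>
        rcases eq_zero_or_one_of_mem hb with rfl | rfl <;>
        simp only [happ_cons, hsub, cons_append, nil_append, cons.injEq, true_and] at h
      · rw [ih hx' hy' h]
      · exact absurd h (happ_ne_zero_cons _ _)
      · exact absurd h.symm (happ_ne_zero_cons _ _)
      · rw [ih hx' hy' h]

/-- The proper suffixes of the blocks `h 0 = 11` and `h 1 = 110`. -/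
def blockTails : List (List ℕ) := [[], [0], [1], [1, 0]]

theorem mem_blockTails {a : ℕ} {s : List ℕ} (ha : a ∈ [0, 1]) (hs : s <:+ hsub a)
    (hne : s ≠ hsub a) : s ∈ blockTails := by
  rw [← mem_tails] at hs
  rcases eq_zero_or_one_of_mem ha with rfl | rfl <;> simp [hsub] at hs hne <;>
    aesop (add norm blockTails)

theorem eq_of_suffix_hsub {a b : ℕ} {s : List ℕ} (ha : a ∈ [0, 1]) (hb : b ∈ [0, 1])
    (hsa : s <:+ hsub a) (hsb : s <:+ hsub b) (hs : s ≠ []) : a = b := by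
  rw [← mem_tails] at hsa hsb
  rcases eq_zero_or_one_of_mem ha with rfl | rfl <;>
    rcases eq_zero_or_one_of_mem hb with rfl | rfl <;> simp [hsub] at hsa hsb <;> aesop

theorem eq_nil_or_one_or_one_one_of_prefix_hsub {b : ℕ} {p : List ℕ} (hb : b ∈ [0, 1])
    (hp : p <+: hsub b) (hne : p ≠ hsub b) : p = [] ∨ p = [1] ∨ p = [1, 1] := by
  rw [← mem_inits] at hp
  rcases eq_zero_or_one_of_mem hb with rfl | rfl <;> simp [hsub] at hp hne <;> simp_all

theorem eq_of_append_happ_eq {s t x y : List ℕ} (hs : s ∈ blockTails) (ht : t ∈ blockTails)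
    (hx : x ⊆ [0, 1]) (hy : y ⊆ [0, 1]) (h : s ++ happ x = t ++ happ y) : s = t ∧ x = y := by
  -- `h x` and `h y` have an even number of `1`s and do not start with `0`.
  have hcount := congrArg (count 1) h
  simp only [count_append, count_happ hx, count_happ hy] at hcount
  simp only [blockTails, mem_cons, not_mem_nil, or_false] at hs ht
  rcases hs with rfl | rfl | rfl | rfl <;> rcases ht with rfl | rfl | rfl | rfl <;>
    simp at h hcount ⊢ <;>
    first
    | omega
    | exact eq_of_happ_eq hx hy h
    | exact happ_ne_zero_cons _ _ h
    | exact happ_ne_zero_cons _ _ h.symm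

theorem subset_zero_of_append_happ_append_one_eq {s t x y : List ℕ} (hx : x ⊆ [0, 1])
    (hy : y ⊆ [0, 1]) (ht : t.length ≤ 2) (h : s ++ happ x ++ [1] = t ++ happ y) :
    x ⊆ [0] := by
  -- Compare last letters: `h y` ends in `11` or in `0`, so `x` and `y` both end in `0`.
  induction x using List.reverseRecOn generalizing y with
  | nil => exact nil_subset _
  | append_singleton x a ih =>
    obtain ⟨hx₁, ha⟩ := append_subset.1 hx
    rcases eq_nil_or_concat y with rfl | ⟨y, b, rfl⟩
    · have := congrArg length h
      rcases eq_zero_or_one_of_mem (ha (mem_singleton_self a)) with rfl | rfl <;>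
        simp [happ_append, happ_singleton, happ_nil, hsub] at this <;> omega
    rw [concat_eq_append] at hy h
    obtain ⟨hy₁, hb⟩ := append_subset.1 hy
    rcases eq_zero_or_one_of_mem (ha (mem_singleton_self a)) with rfl | rfl <;>
      rcases eq_zero_or_one_of_mem (hb (mem_singleton_self b)) with rfl | rfl
    · have h' : (s ++ happ x ++ [1]) ++ [1, 1] = (t ++ happ y) ++ [1, 1] := by
        simpa [happ_append, happ_singleton, hsub] using h
      exact append_subset.2 ⟨ih hx₁ hy₁ (append_cancel_right h'), List.Subset.refl _⟩
    all_goals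
      have := congrArg reverse h
      simp [happ_append, happ_singleton, hsub] at this

theorem zero_zero_not_infix_happ (u : List ℕ) : ¬[0, 0] <:+: happ u := by
  induction u with
  | nil => simp [happ_nil]
  | cons a u ih =>
    rw [happ_cons, infix_append_iff_ne_nil]
    rintro (h | h | ⟨l₁, l₂, h₁, h₂, h, -, ⟨t, ht⟩⟩)
    · match a with
      | 0 | 1 => revert h; decide
      | _ + 2 => simp [hsub] at h
    · exact ih h
    · have hl₂ : l₂ ∈ [0, 0].tails := (mem_tails _ _).2 ⟨l₁, h.symm⟩
      simp only [tails, mem_cons, not_mem_nil, or_false] at hl₂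
      rcases hl₂ with rfl | rfl | rfl
      · exact happ_ne_zero_cons u _ ht.symm
      · exact happ_ne_zero_cons u _ ht.symm
      · exact h₂ rfl

def IsKFactor (w : List ℕ) : Prop := ∃ m, w <:+: Kword m

def IsKRightSpecial (w : List ℕ) : Prop := IsKFactor (w ++ [0]) ∧ IsKFactor (w ++ [1])

theorem IsKFactor.of_infix {v w : List ℕ} (hv : IsKFactor v) (hw : w <:+: v) : IsKFactor w :=
  hv.imp fun _ hm => hw.trans hm

theorem IsKFactor.subset {w : List ℕ} (hw : IsKFactor w) : w ⊆ [0, 1] :=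
  let ⟨m, hm⟩ := hw
  fun _ ha => Kword_subset m (hm.subset ha)

theorem not_isKFactor_zero_zero : ¬IsKFactor [0, 0] := by
  rintro ⟨_ | m, hm⟩
  · simpa [Kword] using hm.length_le
  · exact zero_zero_not_infix_happ _ (Kword_succ m ▸ hm)

/-- `s ++ h v` is the suffix of `h (e ++ v)` that starts strictly inside the block of the letter
`e`, if there is one. -/
def IsBlockTail (s e : List ℕ) : Prop :=
  s = [] ∧ e = [] ∨ ∃ a, s ≠ [] ∧ s <:+ hsub a ∧ s ≠ hsub a ∧ e = [a]

namespace IsBlockTail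

variable {s e e' : List ℕ}

theorem suffix_happ (h : IsBlockTail s e) : s <:+ happ e := by
  rcases h with ⟨rfl, rfl⟩ | ⟨a, -, hs, -, rfl⟩
  · exact nil_suffix
  · rwa [happ_singleton]

theorem length_le (h : IsBlockTail s e) : e.length ≤ s.length := by
  rcases h with ⟨rfl, rfl⟩ | ⟨a, hs, -, -, rfl⟩
  · rfl
  · exact length_pos_iff.2 hs

theorem mem_blockTails (h : IsBlockTail s e) (he : e ⊆ [0, 1]) : s ∈ blockTails := by
  rcases h with ⟨rfl, rfl⟩ | ⟨a, -, hs, hne, rfl⟩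
  · simp [blockTails]
  · exact KFixedPoint.mem_blockTails (he (mem_singleton_self a)) hs hne

theorem unique (h : IsBlockTail s e) (h' : IsBlockTail s e') (he : e ⊆ [0, 1])
    (he' : e' ⊆ [0, 1]) : e = e' := by
  rcases h with ⟨rfl, rfl⟩ | ⟨a, hs, hsa, -, rfl⟩
  · rcases h' with ⟨-, rfl⟩ | ⟨b, hs', -⟩
    · rfl
    · exact absurd rfl hs'
  · rcases h' with ⟨rfl, -⟩ | ⟨b, -, hsb, -, rfl⟩
    · exact absurd rfl hs
    · rw [eq_of_suffix_hsub (he (mem_singleton_self a)) (he' (mem_singleton_self b)) hsa hsb hs]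

theorem length_le_two (h : IsBlockTail s e) (he : e ⊆ [0, 1]) : s.length ≤ 2 := by
  have hs := h.mem_blockTails he
  simp only [blockTails, mem_cons, not_mem_nil, or_false] at hs
  rcases hs with rfl | rfl | rfl | rfl <;> simp

end IsBlockTail

theorem IsKFactor.exists_parse {x : List ℕ} (hx : IsKFactor x) (hlen : 4 ≤ x.length) :
    ∃ s e v p, x = s ++ happ v ++ p ∧ IsBlockTail s e ∧ IsKFactor (e ++ v) ∧
      p ∈ [[], [1], [1, 1]] := by
  obtain ⟨_ | m, hm⟩ := hx
  · simpa [Kword] using hm.length_le.trans' hlen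
  rw [Kword_succ] at hm
  have hblock : ∀ a ∈ Kword m, (hsub a).length < x.length := fun a ha => by
    rcases eq_zero_or_one_of_mem (Kword_subset m ha) with rfl | rfl <;> simp [hsub] <;> omega
  obtain ⟨s, v, p, rfl, hv, hs, hp⟩ :=
    exists_eq_append_flatMap_append_of_infix hsub hm hblock
  have hp' : p ∈ [[], [1], [1, 1]] := by
    rcases hp with rfl | ⟨b, hpb, hne, hb⟩
    · simp
    · have := eq_nil_or_one_or_one_one_of_prefix_hsub (Kword_subset m (hb.subset (by simp))) hpb hne
      simpa using this
  by_cases hs₀ : s = []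
  · exact ⟨s, [], v, p, rfl, .inl ⟨hs₀, rfl⟩, ⟨m, hv⟩, hp'⟩
  · obtain ⟨a, hsa, hne, ha⟩ := hs.resolve_left hs₀
    exact ⟨s, [a], v, p, rfl, .inr ⟨a, hs₀, hsa, hne, rfl⟩, ⟨m, ha⟩, hp'⟩

theorem IsKFactor.exists_parse_of_concat_zero {w : List ℕ} (h : IsKFactor (w ++ [0]))
    (hlen : 3 ≤ w.length) :
    ∃ s e v, w = s ++ happ v ++ [1, 1] ∧ IsBlockTail s e ∧ IsKFactor (e ++ v ++ [1]) := by
  obtain ⟨s, e, v, p, hw, hse, hv, hp⟩ := h.exists_parse (by simp; omega)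
  have hs := hse.length_le_two fun a ha => hv.subset (mem_append_left v ha)
  obtain rfl : p = [] := by
    simp only [mem_cons, not_mem_nil, or_false] at hp
    rcases hp with rfl | rfl | rfl
    · rfl
    all_goals simpa using congrArg getLast? hw
  rw [append_nil] at hw
  rcases eq_nil_or_concat v with rfl | ⟨v, c, rfl⟩
  · have := congrArg length hw
    simp [happ_nil] at this
    omega
  rw [concat_eq_append] at hv hw
  rcases eq_zero_or_one_of_mem (hv.subset (mem_append_right e mem_concat_self)) with rfl | rfl
  · simpa [happ_append, happ_singleton, hsub] using congrArg getLast? hw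
  · refine ⟨s, e, v, ?_, hse, by simpa using hv⟩
    apply append_cancel_right (bs := [0])
    simpa [happ_append, happ_singleton, hsub] using hw

theorem IsKFactor.exists_parse_of_concat_one {w : List ℕ} (h : IsKFactor (w ++ [1]))
    (hw₁ : w.getLast? = some 1) (hlen : 3 ≤ w.length) :
    ∃ s e v, IsBlockTail s e ∧ (w = s ++ happ v ++ [1, 1] ∧ IsKFactor (e ++ v ++ [0]) ∨
      w = s ++ happ v ++ [1] ∧ IsKFactor (e ++ v)) := by
  obtain ⟨s, e, v, p, hw, hse, hv, hp⟩ := h.exists_parse (by simp; omega)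
  have hs := hse.length_le_two fun a ha => hv.subset (mem_append_left v ha)
  refine ⟨s, e, ?_⟩
  simp only [mem_cons, not_mem_nil, or_false] at hp
  rcases hp with rfl | rfl | rfl
  · rw [append_nil] at hw
    rcases eq_nil_or_concat v with rfl | ⟨v, c, rfl⟩
    · have := congrArg length hw
      simp [happ_nil] at this
      omega
    rw [concat_eq_append] at hv hw
    rcases eq_zero_or_one_of_mem (hv.subset (mem_append_right e mem_concat_self)) with rfl | rfl
    · refine ⟨v, hse, .inr ⟨append_cancel_right (bs := [1]) ?_, hv.of_infix ⟨[], [0], by simp⟩⟩⟩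
      simpa [happ_append, happ_singleton, hsub] using hw
    · simpa [happ_append, happ_singleton, hsub] using congrArg getLast? hw
  · obtain rfl : w = s ++ happ v := append_cancel_right hw
    rcases eq_nil_or_concat v with rfl | ⟨v, c, rfl⟩
    · simp [happ_nil] at hlen
      omega
    rw [concat_eq_append] at hv hw₁ ⊢
    rcases eq_zero_or_one_of_mem (hv.subset (mem_append_right e mem_concat_self)) with rfl | rfl
    · exact ⟨v, hse, .inl ⟨by simp [happ_append, happ_singleton, hsub], by simpa using hv⟩⟩
    · simp [happ_append, happ_singleton, hsub] at hw₁
  · refine ⟨v, hse, .inr ⟨append_cancel_right (bs := [1]) ?_, hv⟩⟩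
    simpa using hw

def psi (w : List ℕ) : List ℕ := happ w ++ [1, 1]

theorem zero_zero_infix_of_subset_zero {v : List ℕ} (hv : v ⊆ [0]) (hlen : 2 ≤ v.length) :
    [0, 0] <:+: v := by
  match v, hv, hlen with
  | a :: b :: v, hv, _ =>
    obtain rfl : a = 0 := by simpa using hv mem_cons_self
    obtain rfl : b = 0 := by simpa using hv (mem_cons_of_mem _ mem_cons_self)
    exact prefix_append _ _ |>.isInfix

theorem IsKRightSpecial.exists_lift {w : List ℕ} (hw : IsKRightSpecial w) (hlen : 7 ≤ w.length) :
    ∃ z, IsKRightSpecial z ∧ z.length < w.length ∧ w <:+ psi z := by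
  obtain ⟨s, e, v, rfl, hse, hv₁⟩ := hw.1.exists_parse_of_concat_zero (by omega)
  have he : e ⊆ [0, 1] := fun a ha => hv₁.subset (by simp [ha])
  have hv : v ⊆ [0, 1] := fun a ha => hv₁.subset (by simp [ha])
  have hs := hse.length_le_two he
  have hlen_happ := length_happ hv
  simp only [length_append, length_cons, length_nil] at hlen
  obtain ⟨s', e', v', hse', ⟨hw', hv'₀⟩ | ⟨hw', hv'⟩⟩ :=
    hw.2.exists_parse_of_concat_one (by simp) (by simp; omega)
  · have he' : e' ⊆ [0, 1] := fun a ha => hv'₀.subset (by simp [ha])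
    have hv' : v' ⊆ [0, 1] := fun a ha => hv'₀.subset (by simp [ha])
    obtain ⟨rfl, rfl⟩ := eq_of_append_happ_eq (hse.mem_blockTails he) (hse'.mem_blockTails he')
      hv hv' (append_cancel_right hw')
    obtain rfl := hse.unique hse' he he'
    refine ⟨e ++ v, ⟨by simpa using hv'₀, by simpa using hv₁⟩, ?_, ?_⟩
    · have := hse.length_le
      simp only [length_append]
      omega
    · obtain ⟨t, ht⟩ := hse.suffix_happ
      exact ⟨t, by simp [psi, happ_append, ← ht]⟩
  · -- This second reading of `w` forces `v` to consist of `0`s, while `h v` has length `≥ 3`.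
    have hv₀ : v ⊆ [0] := subset_zero_of_append_happ_append_one_eq hv
      (fun a ha => hv'.subset (mem_append_right e' ha))
      (hse'.length_le_two fun a ha => hv'.subset (mem_append_left v' ha))
      (append_cancel_right (bs := [1]) (by simpa using hw'))
    have hcount : v.count 1 = 0 := count_eq_zero.2 fun h => by simpa using hv₀ h
    refine absurd (hv₁.of_infix ?_) not_isKFactor_zero_zero
    exact (zero_zero_infix_of_subset_zero hv₀ (by omega)).trans
      (infix_append_of_infix_left infix_append_right)

def mainBranch (n : ℕ) : List ℕ := psi^[n] [1]

def sideBranch (n : ℕ) : List ℕ := psi^[n] [1, 1, 1]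

def shortFactors : List (List ℕ) :=
  ((Kword 4).tails.flatMap fun t => (t.take 7).inits).dedup

theorem take_tails_happ_mem_shortFactors :
    ∀ v ∈ shortFactors, ∀ t ∈ (happ v).tails, t.take 7 ∈ shortFactors := by
  decide +kernel

theorem inits_mem_shortFactors : ∀ u ∈ shortFactors, ∀ w ∈ u.inits, w ∈ shortFactors := by
  decide +kernel

theorem mem_shortFactors_of_infix_happ {v w : List ℕ} (hv : v ∈ shortFactors)
    (hw : w <:+: happ v) (hlen : w.length ≤ 7) : w ∈ shortFactors := by
  obtain ⟨t, hwt, ht⟩ := infix_iff_prefix_suffix.1 hw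
  exact inits_mem_shortFactors _ (take_tails_happ_mem_shortFactors v hv t ((mem_tails _ _).2 ht))
    w ((mem_inits _ _).2 (prefix_take_iff.2 ⟨hwt, hlen⟩))

theorem IsKFactor.mem_shortFactors {w : List ℕ} (hw : IsKFactor w) (hlen : w.length ≤ 7) :
    w ∈ shortFactors := by
  obtain ⟨m, hm⟩ := hw
  induction m generalizing w with
  | zero =>
    exact mem_shortFactors_of_infix_happ (v := [0]) (by decide +kernel) (hm.trans (by decide)) hlen
  | succ m ih =>
    rcases eq_or_ne w [] with rfl | hw₀
    · decide +kernel
    rw [Kword_succ] at hm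
    obtain ⟨v, hv, hwv, hvw⟩ := exists_infix_flatMap_length_le hm hw₀
      fun a ha => hsub_ne_nil (Kword_subset m ha)
    exact mem_shortFactors_of_infix_happ (ih (hvw.trans hlen) hv) hwv hlen

theorem suffix_of_mem_shortFactors : ∀ w ∈ shortFactors, w ++ [0] ∈ shortFactors →
    w ++ [1] ∈ shortFactors → w <:+ mainBranch 2 ∨ w <:+ sideBranch 0 := by
  decide +kernel

theorem IsKRightSpecial.suffix_of_length_le {w : List ℕ} (hw : IsKRightSpecial w)
    (hlen : w.length ≤ 6) : w <:+ mainBranch 2 ∨ w <:+ sideBranch 0 :=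
  suffix_of_mem_shortFactors w ((hw.1.of_infix (prefix_append _ _).isInfix).mem_shortFactors
    (by omega)) (hw.1.mem_shortFactors (by simp; omega)) (hw.2.mem_shortFactors (by simp; omega))

theorem psi_suffix_psi {u v : List ℕ} (h : u <:+ v) : psi u <:+ psi v := by
  obtain ⟨t, rfl⟩ := h
  exact ⟨happ t, by simp [psi, happ_append]⟩

theorem iterate_psi_suffix {u v : List ℕ} (h : u <:+ v) (n : ℕ) : psi^[n] u <:+ psi^[n] v := by
  induction n with
  | zero => exact h
  | succ n ih =>
    simp only [Function.iterate_succ_apply']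
    exact psi_suffix_psi ih

theorem iterate_psi_suffix_of_le {u : List ℕ} (h : u <:+ psi u) {m n : ℕ} (hmn : m ≤ n) :
    psi^[m] u <:+ psi^[n] u := by
  induction n, hmn using Nat.le_induction with
  | base => exact suffix_refl _
  | succ n _ ih =>
    rw [Function.iterate_succ_apply]
    exact ih.trans (iterate_psi_suffix h n)

theorem psi_subset (u : List ℕ) : psi u ⊆ [0, 1] :=
  append_subset.2 ⟨happ_subset u, by simp⟩

theorem iterate_psi_subset {u : List ℕ} (hu : u ⊆ [0, 1]) : ∀ n, psi^[n] u ⊆ [0, 1]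
  | 0 => hu
  | n + 1 => by rw [Function.iterate_succ_apply']; exact psi_subset _

theorem length_psi {u : List ℕ} (hu : u ⊆ [0, 1]) :
    (psi u).length = 2 * u.length + u.count 1 + 2 := by
  simp [psi, length_happ hu]

theorem count_psi {u : List ℕ} (hu : u ⊆ [0, 1]) : (psi u).count 1 = 2 * u.length + 2 := by
  simp [psi, count_append, count_happ hu]

theorem length_iterate_psi_lt {u v : List ℕ} (hu : u ⊆ [0, 1]) (hv : v ⊆ [0, 1])
    (hlen : u.length < v.length) (hcount : u.count 1 ≤ v.count 1) (n : ℕ) :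
    (psi^[n] u).length < (psi^[n] v).length := by
  suffices ∀ n, (psi^[n] u).length < (psi^[n] v).length ∧
      (psi^[n] u).count 1 ≤ (psi^[n] v).count 1 from (this n).1
  intro n
  induction n with
  | zero => exact ⟨hlen, hcount⟩
  | succ n ih =>
    simp only [Function.iterate_succ_apply', length_psi (iterate_psi_subset hu n),
      length_psi (iterate_psi_subset hv n), count_psi (iterate_psi_subset hu n),
      count_psi (iterate_psi_subset hv n)]
    omega

theorem mainBranch_succ (n : ℕ) : mainBranch (n + 1) = psi (mainBranch n) :=
  Function.iterate_succ_apply' psi n [1]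

theorem sideBranch_succ (n : ℕ) : sideBranch (n + 1) = psi (sideBranch n) :=
  Function.iterate_succ_apply' psi n [1, 1, 1]

theorem IsKRightSpecial.suffix_mainBranch_or_sideBranch {w : List ℕ} (hw : IsKRightSpecial w) :
    (∃ n, w <:+ mainBranch n) ∨ ∃ n, w <:+ sideBranch n := by
  induction hlen : w.length using Nat.strong_induction_on generalizing w with
  | _ len ih =>
  rcases le_or_gt w.length 6 with hlen₆ | hlen₆
  · exact (hw.suffix_of_length_le hlen₆).imp (⟨2, ·⟩) (⟨0, ·⟩)
  obtain ⟨z, hz, hzw, hwz⟩ := hw.exists_lift hlen₆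
  rcases ih _ (hlen ▸ hzw) hz rfl with ⟨n, hn⟩ | ⟨n, hn⟩
  · exact .inl ⟨n + 1, hwz.trans (mainBranch_succ n ▸ psi_suffix_psi hn)⟩
  · exact .inr ⟨n + 1, hwz.trans (sideBranch_succ n ▸ psi_suffix_psi hn)⟩

def OnMainBranch (w : List ℕ) : Prop := ∃ n, w <:+ mainBranch n

theorem OnMainBranch.eq {w w' : List ℕ} (hw : OnMainBranch w) (hw' : OnMainBranch w')
    (hlen : w.length = w'.length) : w = w' := by
  obtain ⟨m, hm⟩ := hw
  obtain ⟨n, hn⟩ := hw'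
  have hsuffix : ∀ {l}, l ≤ max m n → mainBranch l <:+ mainBranch (max m n) :=
    iterate_psi_suffix_of_le (by decide)
  exact (suffix_of_suffix_length_le (hm.trans (hsuffix (le_max_left m n)))
    (hn.trans (hsuffix (le_max_right m n))) hlen.le).eq_of_length hlen

theorem onMainBranch_of_suffix_sideBranch {w : List ℕ} {m n : ℕ} (h : w <:+ sideBranch n)
    (hmn : m < n) (hlen : w.length ≤ (sideBranch m).length) : OnMainBranch w := by
  -- `w` is a suffix of `ψⁿ(11)`, which is a suffix of both `sideBranch n` and `mainBranch (n + 1)`.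
  have hside : (sideBranch m).length < (psi^[m + 1] [1, 1]).length := by
    rw [Function.iterate_succ_apply]
    exact length_iterate_psi_lt (by simp) (psi_subset _) (by decide) (by decide) m
  have hbranch : psi^[m + 1] [1, 1] <:+ psi^[n] [1, 1] := iterate_psi_suffix_of_le (by decide) hmn
  have hw : w <:+ psi^[n] [1, 1] := suffix_of_suffix_length_le h
    (iterate_psi_suffix (by decide) n) (by have := hbranch.length_le; omega)
  refine ⟨n + 1, hw.trans ?_⟩
  rw [mainBranch, Function.iterate_succ_apply]
  exact iterate_psi_suffix (by decide) n

theorem IsKRightSpecial.eq_of_onMainBranch_iff {w w' : List ℕ} (hw : IsKRightSpecial w)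
    (hw' : IsKRightSpecial w') (hlen : w.length = w'.length)
    (hiff : OnMainBranch w ↔ OnMainBranch w') : w = w' := by
  by_cases hmain : OnMainBranch w
  · exact hmain.eq (hiff.1 hmain) hlen
  have hmain' := hiff.not.1 hmain
  obtain ⟨m, hm⟩ := hw.suffix_mainBranch_or_sideBranch.resolve_left hmain
  obtain ⟨n, hn⟩ := hw'.suffix_mainBranch_or_sideBranch.resolve_left hmain'
  rcases lt_trichotomy m n with hmn | rfl | hmn
  · exact absurd (onMainBranch_of_suffix_sideBranch hn hmn (hlen ▸ hm.length_le)) hmain'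
  · exact (suffix_of_suffix_length_le hm hn hlen.le).eq_of_length hlen
  · exact absurd (onMainBranch_of_suffix_sideBranch hm hmn (hlen ▸ hn.length_le)) hmain

theorem length_Kword_ge (m : ℕ) : m + 1 ≤ (Kword m).length := by
  induction m with
  | zero => simp [Kword]
  | succ m ih =>
    rw [Kword_succ, length_happ (Kword_subset m)]
    omega

theorem IsFactor.isKFactor {k : ℕ → ℕ}
    (hk : ∀ (m i : ℕ), i < (Kword m).length → k (i + 1) = (Kword m).getD i 0) {u : List ℕ}
    (hu : IsFactor k u) : IsKFactor u := by
  obtain ⟨i, hi, hu⟩ := hu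
  have hlen := length_Kword_ge (i + u.length)
  have heq : u = ((Kword (i + u.length)).drop (i - 1)).take u.length := by
    refine ext_getElem (by simp; omega) fun j hj _ => ?_
    have hk' := hk (i + u.length) (i - 1 + j) (by omega)
    rw [show i - 1 + j + 1 = i + j by omega, ← hu j hj, getD_eq_getElem _ _ hj,
      getD_eq_getElem _ _ (by omega)] at hk'
    simpa using hk'
  exact ⟨_, heq ▸ (take_prefix _ _).isInfix.trans (drop_suffix _ _).isInfix⟩

theorem IsRightSpecial.isKRightSpecial {k : ℕ → ℕ}
    (hk : ∀ (m i : ℕ), i < (Kword m).length → k (i + 1) = (Kword m).getD i 0) {w : List ℕ}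
    (hw : IsRightSpecial k w) : IsKRightSpecial w :=
  ⟨IsFactor.isKFactor hk hw.1, IsFactor.isKFactor hk hw.2⟩

end KFixedPoint

open KFixedPoint in
/-- For every `n ≥ 1`, the fixed point `k` of `h` has at most two distinct
right-special factors of length `n`. -/
theorem at_most_two_right_special
    (k : ℕ → ℕ)
    (hk : ∀ (m i : ℕ), i < (Kword m).length → k (i + 1) = (Kword m).getD i 0) :
    ∀ n : ℕ, 1 ≤ n →
      ∀ w₁ w₂ w₃ : List ℕ,
        w₁.length = n → w₂.length = n → w₃.length = n →
        IsRightSpecial k w₁ → IsRightSpecial k w₂ → IsRightSpecial k w₃ →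
        w₁ = w₂ ∨ w₁ = w₃ ∨ w₂ = w₃ := by
  intro n _ w₁ w₂ w₃ h₁ h₂ h₃ r₁ r₂ r₃
  replace r₁ := r₁.isKRightSpecial hk
  replace r₂ := r₂.isKRightSpecial hk
  replace r₃ := r₃.isKRightSpecial hk
  have : (OnMainBranch w₁ ↔ OnMainBranch w₂) ∨ (OnMainBranch w₁ ↔ OnMainBranch w₃) ∨
      (OnMainBranch w₂ ↔ OnMainBranch w₃) := by
    tauto
  rcases this with h | h | h
  · exact .inl (r₁.eq_of_onMainBranch_iff r₂ (h₁.trans h₂.symm) h)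
  · exact .inr (.inl (r₁.eq_of_onMainBranch_iff r₃ (h₁.trans h₃.symm) h))
  · exact .inr (.inr (r₂.eq_of_onMainBranch_iff r₃ (h₂.trans h₃.symm) h))
end
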